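/- arXiv:1609.08130 — 2 statements merged into one kernel-verified Lean document; each statement's English description precedes it below -/
import Mathlib

section
/- Suppose M ∈ ℂ^{p×n} and G ∈ ℂ^{n×b} satisfy A[P,B] = M·G exactly, and let (S, R, T) be an ε-accurate interpolative decomposition of the stacked matrix [A[O,B]; G], i.e. ‖[A[O,R]; G[:,R]] - [A[O,S]; G[:,S]]·T‖ ≤ ε‖[A[O,B]; G]‖. Then the same skeleton set S and interpolation matrix T give an interpolative decomposition of the full far-field block [A[O,B]; A[P,B]] with error at most ε·max(1, ‖M‖)·‖[A[O,B]; G]‖, i.e. ‖[A[O,R]; A[P,R]] - [A[O,S]; A[P,S]]·T‖ ≤ ε·max(1,‖M‖)·‖[A[O,B]; G]‖. -/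
open Matrix
open scoped Matrix.Norms.L2Operator

/-!
Splitting the columns `B = R ⊕ S`, the residual `X[:,R] - X[:,S] T` commutes with stacking
rows and with left multiplication. Hence the residual of
`[A[O,B]; M G]` is `[E₁; M E₂]`, where `[E₁; E₂]` is the residual of `[A[O,B]; G]`, and for each
vector `x` one has `‖E₁ x‖² + ‖M E₂ x‖² ≤ max(1, ‖M‖)² (‖E₁ x‖² + ‖E₂ x‖²)`.
-/

namespace Matrix

variable {m m₁ m₂ k₁ k₂ n R S α 𝕜 : Type*}

def interpResidual [Fintype S] [Ring α] (A : Matrix m (R ⊕ S) α) (T : Matrix S R α) :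
    Matrix m R α :=
  A.submatrix id Sum.inl - A.submatrix id Sum.inr * T

section Residual

variable [Fintype S] [Ring α]

lemma interpResidual_fromRows (A : Matrix m₁ (R ⊕ S) α) (B : Matrix m₂ (R ⊕ S) α)
    (T : Matrix S R α) :
    interpResidual (fromRows A B) T = fromRows (interpResidual A T) (interpResidual B T) := by
  ext (i | i) j <;> rfl

lemma interpResidual_mul [Fintype n] (M : Matrix m n α) (G : Matrix n (R ⊕ S) α)
    (T : Matrix S R α) : interpResidual (M * G) T = M * interpResidual G T := by
  simp only [interpResidual, Matrix.mul_sub, ← Matrix.mul_assoc,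
    submatrix_mul M G id id _ Function.bijective_id, submatrix_id_id]

end Residual

section L2

variable [RCLike 𝕜]

lemma norm_sq_toLp_sumElim [Fintype m₁] [Fintype m₂] (u : m₁ → 𝕜) (v : m₂ → 𝕜) :
    ‖WithLp.toLp 2 (Sum.elim u v)‖ ^ 2 = ‖WithLp.toLp 2 u‖ ^ 2 + ‖WithLp.toLp 2 v‖ ^ 2 := by
  simp [EuclideanSpace.norm_sq_eq, Fintype.sum_sum_type]

lemma l2_opNorm_one_le [Fintype m] [DecidableEq m] : ‖(1 : Matrix m m 𝕜)‖ ≤ 1 := by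
  have h := l2_opNorm_conjTranspose_mul_self (1 : Matrix m m 𝕜)
  rw [conjTranspose_one, Matrix.one_mul] at h
  nlinarith [norm_nonneg (1 : Matrix m m 𝕜)]

variable [Fintype m₁] [Fintype m₂] [Fintype k₁] [Fintype k₂] [Fintype n]
  [DecidableEq k₁] [DecidableEq k₂] [DecidableEq n]

lemma l2_opNorm_fromRows_mul_mul_le (L : Matrix m₁ k₁ 𝕜) (M : Matrix m₂ k₂ 𝕜)
    (A : Matrix k₁ n 𝕜) (B : Matrix k₂ n 𝕜) :
    ‖fromRows (L * A) (M * B)‖ ≤ max ‖L‖ ‖M‖ * ‖fromRows A B‖ := by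
  refine ContinuousLinearMap.opNorm_le_bound _ (by positivity) fun x => ?_
  have hx : ‖WithLp.toLp 2 (fromRows (L * A) (M * B) *ᵥ x)‖ ^ 2 ≤
      (max ‖L‖ ‖M‖ * ‖fromRows A B‖ * ‖x‖) ^ 2 := calc
    _ = ‖WithLp.toLp 2 (L *ᵥ (A *ᵥ x))‖ ^ 2 + ‖WithLp.toLp 2 (M *ᵥ (B *ᵥ x))‖ ^ 2 := by
      rw [fromRows_mulVec, ← mulVec_mulVec, ← mulVec_mulVec, norm_sq_toLp_sumElim]
    _ ≤ (‖L‖ * ‖WithLp.toLp 2 (A *ᵥ x)‖) ^ 2 + (‖M‖ * ‖WithLp.toLp 2 (B *ᵥ x)‖) ^ 2 := by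
      gcongr
      · exact l2_opNorm_mulVec L (WithLp.toLp 2 (A *ᵥ x))
      · exact l2_opNorm_mulVec M (WithLp.toLp 2 (B *ᵥ x))
    _ ≤ max ‖L‖ ‖M‖ ^ 2 * ‖WithLp.toLp 2 (fromRows A B *ᵥ x)‖ ^ 2 := by
      rw [fromRows_mulVec, norm_sq_toLp_sumElim, mul_pow, mul_pow, mul_add]
      gcongr
      exacts [le_max_left _ _, le_max_right _ _]
    _ ≤ max ‖L‖ ‖M‖ ^ 2 * (‖fromRows A B‖ * ‖x‖) ^ 2 := by
      gcongr
      exact l2_opNorm_mulVec _ x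
    _ = _ := by ring
  exact (pow_le_pow_iff_left₀ (norm_nonneg _) (by positivity) two_ne_zero).mp hx

lemma l2_opNorm_fromRows_mul_le (A : Matrix m₁ n 𝕜) (M : Matrix m₂ k₂ 𝕜)
    (B : Matrix k₂ n 𝕜) : ‖fromRows A (M * B)‖ ≤ max 1 ‖M‖ * ‖fromRows A B‖ := by
  classical
  calc ‖fromRows A (M * B)‖ = ‖fromRows (1 * A) (M * B)‖ := by rw [Matrix.one_mul]
    _ ≤ max ‖(1 : Matrix m₁ m₁ 𝕜)‖ ‖M‖ * ‖fromRows A B‖ := l2_opNorm_fromRows_mul_mul_le 1 M A B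
    _ ≤ max 1 ‖M‖ * ‖fromRows A B‖ := by gcongr; exact l2_opNorm_one_le

end L2

end Matrix

theorem proxy_surface_id_general
    {O P n R S : Type*} [Fintype O] [Fintype P] [Fintype n] [Fintype R] [Fintype S]
    [DecidableEq n] [DecidableEq R] [DecidableEq S]
    (AOB : Matrix O (R ⊕ S) ℂ) (APB : Matrix P (R ⊕ S) ℂ)
    (M : Matrix P n ℂ) (G : Matrix n (R ⊕ S) ℂ)
    (hfact : APB = M * G)
    (T : Matrix S R ℂ) (ε : ℝ)
    (hID : ‖(Matrix.fromRows AOB G).submatrix id Sum.inl -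
            (Matrix.fromRows AOB G).submatrix id Sum.inr * T‖ ≤
           ε * ‖Matrix.fromRows AOB G‖) :
    ‖(Matrix.fromRows AOB APB).submatrix id Sum.inl -
     (Matrix.fromRows AOB APB).submatrix id Sum.inr * T‖ ≤
      ε * max 1 ‖M‖ * ‖Matrix.fromRows AOB G‖ := by
  change ‖interpResidual (fromRows AOB G) T‖ ≤ _ at hID
  change ‖interpResidual (fromRows AOB APB) T‖ ≤ _
  rw [interpResidual_fromRows] at hID
  rw [hfact, interpResidual_fromRows, interpResidual_mul]
  calc _ ≤ max 1 ‖M‖ * ‖fromRows (interpResidual AOB T) (interpResidual G T)‖ :=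
        l2_opNorm_fromRows_mul_le _ M _
    _ ≤ max 1 ‖M‖ * (ε * ‖fromRows AOB G‖) := by gcongr
    _ = ε * max 1 ‖M‖ * ‖fromRows AOB G‖ := by ring

/-- The proxy-surface compression trick: if the far-field block `A[P,B]` factors exactly
through a proxy matrix `G` as `A[P,B] = M·G`, and `(S, R, T)` is an `ε`-accurate
interpolative decomposition of the stacked matrix `[A[O,B]; G]`, then the same skeleton
set `S` and interpolation matrix `T` give an interpolative decomposition of the full
far-field block `[A[O,B]; A[P,B]]` with error at most `ε·max(1,‖M‖)·‖[A[O,B]; G]‖`. -/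
theorem proxy_surface_id
    {O P n R S : Type*} [Fintype O] [Fintype P] [Fintype n] [Fintype R] [Fintype S]
    [DecidableEq O] [DecidableEq P] [DecidableEq n] [DecidableEq R] [DecidableEq S]
    (AOB : Matrix O (R ⊕ S) ℂ) (APB : Matrix P (R ⊕ S) ℂ)
    (M : Matrix P n ℂ) (G : Matrix n (R ⊕ S) ℂ)
    (hfact : APB = M * G)
    (T : Matrix S R ℂ) (ε : ℝ) (hε : 0 < ε)
    (hID : ‖(Matrix.fromRows AOB G).submatrix id Sum.inl -
            (Matrix.fromRows AOB G).submatrix id Sum.inr * T‖ ≤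
           ε * ‖Matrix.fromRows AOB G‖) :
    ‖(Matrix.fromRows AOB APB).submatrix id Sum.inl -
     (Matrix.fromRows AOB APB).submatrix id Sum.inr * T‖ ≤
      ε * max 1 ‖M‖ * ‖Matrix.fromRows AOB G‖ :=
  proxy_surface_id_general AOB APB M G hfact T ε hID
end

section
/- With the notation of the exact strong skeletonization step: if A[R,F] = T*·A[S,F] and A[F,R] = A[F,S]·T, let B = U_T·A·L_T (so B[R,F] = B[F,R] = 0), assume B[R,R] is invertible, and let L, U be the block elimination matrices eliminating the (S,R), (N,R) and (R,S), (R,N) blocks of B using pivot B[R,R]. Then Z = L·B·U satisfies: Z[R,R] = B[R,R]; all other blocks in the R row and R column are zero; the (S,F), (N,F), (F,S), (F,N), (F,F) blocks of Z equal those of A. -/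
open Matrix

variable {R S N F : Type*} [Fintype R] [Fintype S] [Fintype N] [Fintype F]
  [DecidableEq R] [DecidableEq S] [DecidableEq N] [DecidableEq F]

/-- The block unit-triangular matrix `U_T`: identity except the `(R,S)` block is `-T*`. -/
def skelUT (T : Matrix S R ℂ) : Matrix (R ⊕ (S ⊕ (N ⊕ F))) (R ⊕ (S ⊕ (N ⊕ F))) ℂ :=
  1 + Matrix.of (fun i j =>
    match i, j with
    | Sum.inl r, Sum.inr (Sum.inl s) => -(Tᴴ r s)
    | _, _ => 0)

/-- The block unit-triangular matrix `L_T`: identity except the `(S,R)` block is `-T`. -/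
def skelLT (T : Matrix S R ℂ) : Matrix (R ⊕ (S ⊕ (N ⊕ F))) (R ⊕ (S ⊕ (N ⊕ F))) ℂ :=
  1 + Matrix.of (fun i j =>
    match i, j with
    | Sum.inr (Sum.inl s), Sum.inl r => -(T s r)
    | _, _ => 0)

/-- The block unit lower-triangular elimination matrix `L` with blocks
`-B[S,R]·B[R,R]⁻¹` and `-B[N,R]·B[R,R]⁻¹` in the `(S,R)` and `(N,R)` positions. -/
noncomputable def elimL (B : Matrix (R ⊕ (S ⊕ (N ⊕ F))) (R ⊕ (S ⊕ (N ⊕ F))) ℂ) :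
    Matrix (R ⊕ (S ⊕ (N ⊕ F))) (R ⊕ (S ⊕ (N ⊕ F))) ℂ :=
  1 + Matrix.of (fun i j =>
    match i, j with
    | Sum.inr (Sum.inl s), Sum.inl r =>
        -((B.submatrix (Sum.inr ∘ Sum.inl) Sum.inl * (B.submatrix Sum.inl Sum.inl)⁻¹) s r)
    | Sum.inr (Sum.inr (Sum.inl n)), Sum.inl r =>
        -((B.submatrix (Sum.inr ∘ Sum.inr ∘ Sum.inl) Sum.inl *
            (B.submatrix Sum.inl Sum.inl)⁻¹) n r)
    | _, _ => 0)

/-- The block unit upper-triangular elimination matrix `U` with blocks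
`-B[R,R]⁻¹·B[R,S]` and `-B[R,R]⁻¹·B[R,N]` in the `(R,S)` and `(R,N)` positions. -/
noncomputable def elimU (B : Matrix (R ⊕ (S ⊕ (N ⊕ F))) (R ⊕ (S ⊕ (N ⊕ F))) ℂ) :
    Matrix (R ⊕ (S ⊕ (N ⊕ F))) (R ⊕ (S ⊕ (N ⊕ F))) ℂ :=
  1 + Matrix.of (fun i j =>
    match i, j with
    | Sum.inl r, Sum.inr (Sum.inl s) =>
        -(((B.submatrix Sum.inl Sum.inl)⁻¹ * B.submatrix Sum.inl (Sum.inr ∘ Sum.inl)) r s)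
    | Sum.inl r, Sum.inr (Sum.inr (Sum.inl n)) =>
        -(((B.submatrix Sum.inl Sum.inl)⁻¹ *
            B.submatrix Sum.inl (Sum.inr ∘ Sum.inr ∘ Sum.inl)) r n)
    | _, _ => 0)


/-! Because `A[R,F] = T*·A[S,F]` and `A[F,R] = A[F,S]·T`, the interpolation step `U_T·A·L_T`
annihilates the `(R,F)` and `(F,R)` blocks and leaves every block outside the `R` row and column
as it was. With `Q = S ⊕ N ⊕ F`, eliminating with the pivot `B[R,R]` gives
`diag(B[R,R], B[Q,Q] - B[Q,R]·B[R,R]⁻¹·B[R,Q])`, and the correction term vanishes in every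
`F` row and `F` column since it factors through `B[F,R] = 0` and `B[R,F] = 0`. -/

namespace Matrix

section

variable {l m n o α : Type*} [Fintype m] [Fintype n] [NonUnitalNonAssocSemiring α]

theorem mul_mul_apply_eq_zero_of_right (C : Matrix l m α) (M : Matrix m n α) (B : Matrix n o α)
    {i : l} {j : o} (hB : ∀ k, B k j = 0) : (C * M * B) i j = 0 := by
  simp [mul_apply, hB]

theorem mul_mul_apply_eq_zero_of_left (C : Matrix l m α) (M : Matrix m n α) (B : Matrix n o α)
    {i : l} {j : o} (hC : ∀ k, C i k = 0) : (C * M * B) i j = 0 := by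
  simp [mul_apply, hC]

end

theorem fromBlocks_block_elimination {l m α : Type*} [Fintype l] [Fintype m] [DecidableEq l]
    [DecidableEq m] [CommRing α] (P : Matrix m m α) (B : Matrix m l α) (C : Matrix l m α)
    (D : Matrix l l α) (hP : IsUnit P.det) :
    fromBlocks 1 0 (-(C * P⁻¹)) 1 * fromBlocks P B C D * fromBlocks 1 (-(P⁻¹ * B)) 0 1 =
      fromBlocks P 0 0 (D - C * P⁻¹ * B) := by
  simp [fromBlocks_multiply, Matrix.mul_assoc, nonsing_inv_mul P hP,
    mul_nonsing_inv_cancel_left _ _ hP, sub_eq_neg_add]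

end Matrix

section Skeletonization

variable (T : Matrix S R ℂ) (A : Matrix (R ⊕ (S ⊕ (N ⊕ F))) (R ⊕ (S ⊕ (N ⊕ F))) ℂ)

theorem skelUT_mul_apply_inr (q : S ⊕ (N ⊕ F)) (j : R ⊕ (S ⊕ (N ⊕ F))) :
    (skelUT (N := N) (F := F) T * A) (Sum.inr q) j = A (Sum.inr q) j := by
  simp only [skelUT, Matrix.add_mul, Matrix.one_mul, Matrix.add_apply]
  simp [mul_apply]

theorem skelUT_mul_apply_inl (r : R) (j : R ⊕ (S ⊕ (N ⊕ F))) :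
    (skelUT (N := N) (F := F) T * A) (Sum.inl r) j =
      A (Sum.inl r) j - ∑ s, Tᴴ r s * A (Sum.inr (Sum.inl s)) j := by
  simp only [skelUT, Matrix.add_mul, Matrix.one_mul, Matrix.add_apply]
  simp [mul_apply, Fintype.sum_sum_type, sub_eq_add_neg]

theorem mul_skelLT_apply_inr (i : R ⊕ (S ⊕ (N ⊕ F))) (q : S ⊕ (N ⊕ F)) :
    (A * skelLT (N := N) (F := F) T) i (Sum.inr q) = A i (Sum.inr q) := by
  simp only [skelLT, Matrix.mul_add, Matrix.mul_one, Matrix.add_apply]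
  simp [mul_apply]

theorem mul_skelLT_apply_inl (i : R ⊕ (S ⊕ (N ⊕ F))) (r : R) :
    (A * skelLT (N := N) (F := F) T) i (Sum.inl r) =
      A i (Sum.inl r) - ∑ s, A i (Sum.inr (Sum.inl s)) * T s r := by
  simp only [skelLT, Matrix.mul_add, Matrix.mul_one, Matrix.add_apply]
  simp [mul_apply, Fintype.sum_sum_type, sub_eq_add_neg]

theorem skelUT_mul_mul_skelLT_apply_inr_inr (q q' : S ⊕ (N ⊕ F)) :
    (skelUT T * A * skelLT T : Matrix (R ⊕ (S ⊕ (N ⊕ F))) _ ℂ) (Sum.inr q) (Sum.inr q') =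
      A (Sum.inr q) (Sum.inr q') := by
  rw [mul_skelLT_apply_inr, skelUT_mul_apply_inr]

theorem skelUT_mul_mul_skelLT_apply_inl_far
    (hRF : A.submatrix Sum.inl (Sum.inr ∘ Sum.inr ∘ Sum.inr) =
      Tᴴ * A.submatrix (Sum.inr ∘ Sum.inl) (Sum.inr ∘ Sum.inr ∘ Sum.inr)) (r : R) (f : F) :
    (skelUT T * A * skelLT T : Matrix (R ⊕ (S ⊕ (N ⊕ F))) _ ℂ) (Sum.inl r)
      (Sum.inr (Sum.inr (Sum.inr f))) = 0 := by
  have hrf := congr_fun₂ hRF r f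
  simp only [submatrix_apply, mul_apply, Function.comp_apply] at hrf
  rw [mul_skelLT_apply_inr, skelUT_mul_apply_inl, hrf, sub_self]

theorem skelUT_mul_mul_skelLT_apply_far_inl
    (hFR : A.submatrix (Sum.inr ∘ Sum.inr ∘ Sum.inr) Sum.inl =
      A.submatrix (Sum.inr ∘ Sum.inr ∘ Sum.inr) (Sum.inr ∘ Sum.inl) * T) (f : F) (r : R) :
    (skelUT T * A * skelLT T : Matrix (R ⊕ (S ⊕ (N ⊕ F))) _ ℂ)
      (Sum.inr (Sum.inr (Sum.inr f))) (Sum.inl r) = 0 := by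
  have hfr := congr_fun₂ hFR f r
  simp only [submatrix_apply, mul_apply, Function.comp_apply] at hfr
  simp only [mul_skelLT_apply_inl, skelUT_mul_apply_inr, hfr, sub_self]

end Skeletonization

section Elimination

variable (B : Matrix (R ⊕ (S ⊕ (N ⊕ F))) (R ⊕ (S ⊕ (N ⊕ F))) ℂ)

theorem elimL_mul_mul_elimU (hFR : ∀ f r, B (Sum.inr (Sum.inr (Sum.inr f))) (Sum.inl r) = 0)
    (hRF : ∀ r f, B (Sum.inl r) (Sum.inr (Sum.inr (Sum.inr f))) = 0)
    (hpivot : IsUnit (B.submatrix Sum.inl Sum.inl)) :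
    elimL B * B * elimU B = fromBlocks (B.submatrix Sum.inl Sum.inl) 0 0
      (B.submatrix Sum.inr Sum.inr -
        B.submatrix Sum.inr Sum.inl * (B.submatrix Sum.inl Sum.inl)⁻¹ *
          B.submatrix Sum.inl Sum.inr) := by
  have hB : B = fromBlocks (B.submatrix Sum.inl Sum.inl) (B.submatrix Sum.inl Sum.inr)
      (B.submatrix Sum.inr Sum.inl) (B.submatrix Sum.inr Sum.inr) :=
    (fromBlocks_toBlocks B).symm
  have hL : elimL B = fromBlocks 1 0
      (-(B.submatrix Sum.inr Sum.inl * (B.submatrix Sum.inl Sum.inl)⁻¹)) 1 := by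
    ext (r | s | n | f) (r' | s' | n' | f') <;> simp [elimL, one_apply, mul_apply, hFR]
  have hU : elimU B = fromBlocks 1
      (-((B.submatrix Sum.inl Sum.inl)⁻¹ * B.submatrix Sum.inl Sum.inr)) 0 1 := by
    ext (r | s | n | f) (r' | s' | n' | f') <;> simp [elimU, one_apply, mul_apply, hRF]
  rw [hL, hU]
  conv_lhs => rw [hB]
  exact fromBlocks_block_elimination _ _ _ _ ((isUnit_iff_isUnit_det _).mp hpivot)

end Elimination

/-- Exact strong skeletonization: after the interpolation step `B = U_T·A·L_T` (which zeros
out the `(R,F)` and `(F,R)` blocks), block elimination with pivot `B[R,R]` fully decouples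
the redundant DOFs `R`, while all blocks involving the far field `F` (other than those in
the `R` row and column) remain unchanged from `A`. -/
theorem strong_skeletonization_elimination
    (A : Matrix (R ⊕ (S ⊕ (N ⊕ F))) (R ⊕ (S ⊕ (N ⊕ F))) ℂ)
    (T : Matrix S R ℂ)
    (eR : R → R ⊕ (S ⊕ (N ⊕ F))) (eS : S → R ⊕ (S ⊕ (N ⊕ F)))
    (eN : N → R ⊕ (S ⊕ (N ⊕ F))) (eF : F → R ⊕ (S ⊕ (N ⊕ F)))
    (heR : eR = Sum.inl) (heS : eS = Sum.inr ∘ Sum.inl)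
    (heN : eN = Sum.inr ∘ Sum.inr ∘ Sum.inl) (heF : eF = Sum.inr ∘ Sum.inr ∘ Sum.inr)
    (hRF : A.submatrix eR eF = Tᴴ * A.submatrix eS eF)
    (hFR : A.submatrix eF eR = A.submatrix eF eS * T)
    (B : Matrix (R ⊕ (S ⊕ (N ⊕ F))) (R ⊕ (S ⊕ (N ⊕ F))) ℂ)
    (hB : B = skelUT T * A * skelLT T)
    (hpivot : IsUnit (B.submatrix eR eR))
    (Z : Matrix (R ⊕ (S ⊕ (N ⊕ F))) (R ⊕ (S ⊕ (N ⊕ F))) ℂ)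
    (hZ : Z = elimL B * B * elimU B) :
    Z.submatrix eR eR = B.submatrix eR eR ∧
    (Z.submatrix eR eS = 0 ∧ Z.submatrix eR eN = 0 ∧ Z.submatrix eR eF = 0 ∧
     Z.submatrix eS eR = 0 ∧ Z.submatrix eN eR = 0 ∧ Z.submatrix eF eR = 0) ∧
    (Z.submatrix eS eF = A.submatrix eS eF ∧
     Z.submatrix eN eF = A.submatrix eN eF ∧
     Z.submatrix eF eS = A.submatrix eF eS ∧
     Z.submatrix eF eN = A.submatrix eF eN ∧
     Z.submatrix eF eF = A.submatrix eF eF) := by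
  subst heR heS heN heF hB
  have hBRF := skelUT_mul_mul_skelLT_apply_inl_far T A hRF
  have hBFR := skelUT_mul_mul_skelLT_apply_far_inl T A hFR
  have hBQQ := skelUT_mul_mul_skelLT_apply_inr_inr T A
  rw [elimL_mul_mul_elimU _ hBFR hBRF hpivot] at hZ
  subst hZ
  refine ⟨?_, ⟨?_, ?_, ?_, ?_, ?_, ?_⟩, ?_, ?_, ?_, ?_, ?_⟩ <;> ext i j <;>
    simp [mul_mul_apply_eq_zero_of_right, mul_mul_apply_eq_zero_of_left, hBRF, hBFR, hBQQ]
end
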